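/- Each of the three smooth vector fields v₁(x,y,w) = (1,0,0), v₂(x,y,w) = (0,1,0), and v₃(x,y,w) = (y, x, 1) on ℝ³ is an infinitesimal symmetry of the hyperbolic system Σ_H; hence so is every real linear combination a·v₃ + b·v₁ + c·v₂ with a,b,c ∈ ℝ. -/

import Mathlib

open Real Set

/-- The state space ℝ³ with coordinates (x, y, w). -/
abbrev V3 : Type := Fin 3 → ℝ

/-- Lie bracket of vector fields: [v,u](ξ) = Du(ξ)·v(ξ) − Dv(ξ)·u(ξ). -/
noncomputable def lieBr (v u : V3 → V3) : V3 → V3 :=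
  fun ξ => fderiv ℝ u ξ (v ξ) - fderiv ℝ v ξ (u ξ)

/-- `v` is an infinitesimal symmetry of the control-affine system `(f, g)` on `U`. -/
def InfSymmOn (U : Set V3) (f g v : V3 → V3) : Prop :=
  ∀ ξ ∈ U, (∃ c : ℝ, lieBr v g ξ = c • g ξ) ∧ (∃ c : ℝ, lieBr v f ξ = c • g ξ)

/-- The control vector field g₀ = ∂/∂w. -/
def g0 : V3 → V3 := fun _ => ![0, 0, 1]

/-- Drift of the hyperbolic system Σ_H. -/
noncomputable def fH : V3 → V3 := fun ξ => ![Real.cosh (ξ 2), Real.sinh (ξ 2), 0]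

/-! The translations in `x` and `y` commute with `f_H`, which depends on `w` alone, and with the
constant field `g₀`. The field `(y, x, 1)` commutes with both as well: the `w`-derivative
`(sinh w, cosh w)` of `(cosh w, sinh w)` is its image under the swap `(x, y) ↦ (y, x)`.
All brackets vanish, and the symmetry condition is linear in the (differentiable) field. -/

lemma lieBr_const_left (v₀ : V3) (u : V3 → V3) (ξ : V3) :
    lieBr (fun _ => v₀) u ξ = fderiv ℝ u ξ v₀ := by
  simp [lieBr]

lemma lieBr_const_right (v : V3 → V3) (g₀ : V3) (ξ : V3) :
    lieBr v (fun _ => g₀) ξ = -fderiv ℝ v ξ g₀ := by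
  simp [lieBr]

lemma lieBr_smul_left (a : ℝ) (v u : V3 → V3) : lieBr (a • v) u = a • lieBr v u := by
  ext1 ξ
  simp [lieBr, fderiv_const_smul_field, smul_sub]

lemma lieBr_add_left {v w : V3 → V3} (u : V3 → V3) {ξ : V3} (hv : DifferentiableAt ℝ v ξ)
    (hw : DifferentiableAt ℝ w ξ) : lieBr (v + w) u ξ = lieBr v u ξ + lieBr w u ξ := by
  simp only [lieBr, Pi.add_apply, map_add, fderiv_add hv hw, FunLike.coe_add]
  abel

namespace InfSymmOn

variable {U : Set V3} {f g v w : V3 → V3}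

lemma of_lieBr_eq_zero (hg : ∀ ξ ∈ U, lieBr v g ξ = 0) (hf : ∀ ξ ∈ U, lieBr v f ξ = 0) :
    InfSymmOn U f g v :=
  fun ξ hξ => ⟨⟨0, by rw [hg ξ hξ, zero_smul]⟩, ⟨0, by rw [hf ξ hξ, zero_smul]⟩⟩

lemma smul (a : ℝ) (h : InfSymmOn U f g v) : InfSymmOn U f g (a • v) := by
  intro ξ hξ
  obtain ⟨⟨c, hc⟩, ⟨d, hd⟩⟩ := h ξ hξ
  refine ⟨⟨a * c, ?_⟩, ⟨a * d, ?_⟩⟩ <;>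
    simp only [lieBr_smul_left, Pi.smul_apply, hc, hd, smul_smul]

lemma add (hv : ∀ ξ ∈ U, DifferentiableAt ℝ v ξ) (hw : ∀ ξ ∈ U, DifferentiableAt ℝ w ξ)
    (hsv : InfSymmOn U f g v) (hsw : InfSymmOn U f g w) : InfSymmOn U f g (v + w) := by
  intro ξ hξ
  obtain ⟨⟨c, hc⟩, ⟨d, hd⟩⟩ := hsv ξ hξ
  obtain ⟨⟨c', hc'⟩, ⟨d', hd'⟩⟩ := hsw ξ hξ
  refine ⟨⟨c + c', ?_⟩, ⟨d + d', ?_⟩⟩ <;>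
    simp only [lieBr_add_left _ (hv ξ hξ) (hw ξ hξ), hc, hd, hc', hd', add_smul]

end InfSymmOn

lemma fderiv_fH_apply (ξ h : V3) :
    fderiv ℝ fH ξ h = ![sinh (ξ 2) * h 2, cosh (ξ 2) * h 2, 0] := by
  have hasDeriv : HasFDerivAt fH (ContinuousLinearMap.pi
      ![sinh (ξ 2) • .proj 2, cosh (ξ 2) • .proj 2, 0] : V3 →L[ℝ] V3) ξ := by
    rw [hasFDerivAt_pi']
    intro i
    fin_cases i
    · exact (hasFDerivAt_apply 2 ξ).cosh
    · exact (hasFDerivAt_apply 2 ξ).sinh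
    · exact hasFDerivAt_const _ _
  rw [hasDeriv.fderiv]
  ext i
  fin_cases i <;> simp

lemma hasFDerivAt_swap_add_const (ξ : V3) :
    HasFDerivAt (fun ξ : V3 => ![ξ 1, ξ 0, 1])
      (ContinuousLinearMap.pi ![.proj 1, .proj 0, 0] : V3 →L[ℝ] V3) ξ := by
  rw [hasFDerivAt_pi']
  intro i
  fin_cases i
  · exact hasFDerivAt_apply 1 ξ
  · exact hasFDerivAt_apply 0 ξ
  · exact hasFDerivAt_const _ _

lemma fderiv_swap_add_const_apply (ξ h : V3) :
    fderiv ℝ (fun ξ : V3 => ![ξ 1, ξ 0, 1]) ξ h = ![h 1, h 0, 0] := by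
  rw [(hasFDerivAt_swap_add_const ξ).fderiv]
  ext i
  fin_cases i <;> simp

lemma infSymmOn_hyperbolic_const {v₀ : V3} (hv₀ : v₀ 2 = 0) :
    InfSymmOn univ fH g0 (fun _ => v₀) := by
  refine .of_lieBr_eq_zero (fun ξ _ => ?_) (fun ξ _ => ?_)
  · unfold g0
    rw [lieBr_const_left, fderiv_const_apply]
    rfl
  · rw [lieBr_const_left, fderiv_fH_apply, hv₀]
    ext i
    fin_cases i <;> simp

lemma infSymmOn_hyperbolic_boost : InfSymmOn univ fH g0 (fun ξ => ![ξ 1, ξ 0, 1]) := by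
  refine .of_lieBr_eq_zero (fun ξ _ => ?_) (fun ξ _ => ?_)
  · unfold g0
    rw [lieBr_const_right, fderiv_swap_add_const_apply]
    ext i
    fin_cases i <;> simp
  · rw [lieBr, fderiv_fH_apply, fderiv_swap_add_const_apply]
    ext i
    fin_cases i <;> simp [fH]

/-- v₁ = (1,0,0), v₂ = (0,1,0), v₃ = (y,x,1) are infinitesimal symmetries
of Σ_H, and hence so is every real linear combination a·v₃ + b·v₁ + c·v₂. -/
theorem symmetries_of_hyperbolic :
    InfSymmOn univ fH g0 (fun _ => ![1, 0, 0]) ∧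
    InfSymmOn univ fH g0 (fun _ => ![0, 1, 0]) ∧
    InfSymmOn univ fH g0 (fun ξ => ![ξ 1, ξ 0, 1]) ∧
    ∀ a b c : ℝ,
      InfSymmOn univ fH g0
        (fun ξ => a • ![ξ 1, ξ 0, 1] + b • ![(1:ℝ), 0, 0] + c • ![(0:ℝ), 1, 0]) := by
  have h₁ : InfSymmOn univ fH g0 (fun _ => ![1, 0, 0]) := infSymmOn_hyperbolic_const rfl
  have h₂ : InfSymmOn univ fH g0 (fun _ => ![0, 1, 0]) := infSymmOn_hyperbolic_const rfl
  refine ⟨h₁, h₂, infSymmOn_hyperbolic_boost, fun a b c => ?_⟩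
  have hv₃ (ξ : V3) : DifferentiableAt ℝ (fun ξ : V3 => ![ξ 1, ξ 0, 1]) ξ :=
    (hasFDerivAt_swap_add_const ξ).differentiableAt
  exact ((infSymmOn_hyperbolic_boost.smul a).add (fun ξ _ => (hv₃ ξ).const_smul a)
    (fun _ _ => differentiableAt_const _) (h₁.smul b)).add
    (fun ξ _ => ((hv₃ ξ).const_smul a).add (differentiableAt_const _))
    (fun _ _ => differentiableAt_const _) (h₂.smul c)
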